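/- If X is G-sequentially locally connected, then each G-sequentially connected component of X is G-sequentially open. -/

import Mathlib

/-!
Apply local connectedness to the G-open set `univ` at a point `l` of the component of `x`: it
yields a G-connected `V ∋ l` containing a G-open neighbourhood `O` of `l`. Since `V` meets a
G-connected set through `x` at `l`, their union is G-connected, so `O ⊆ V` lies in the component.
-/

open Filter Topology Pointwise

/-- A method of sequential convergence on an additive group `X`: an additive
function defined on a subgroup of the group of `X`-valued sequences. -/
structure SeqMethod (X : Type*) [AddGroup X] where
  dom : AddSubgroup (ℕ → X)
  toFun : dom →+ X

namespace SeqMethod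

variable {X : Type*} [AddGroup X]

/-- `s` G-converges to `l`. -/
def Converges (M : SeqMethod X) (s : ℕ → X) (l : X) : Prop :=
  ∃ h : s ∈ M.dom, M.toFun ⟨s, h⟩ = l

/-- The G-sequential closure of `A`. -/
def GClosure (M : SeqMethod X) (A : Set X) : Set X :=
  {l | ∃ s : ℕ → X, (∀ n, s n ∈ A) ∧ M.Converges s l}

/-- `A` is G-sequentially closed. -/
def GClosed (M : SeqMethod X) (A : Set X) : Prop := M.GClosure A ⊆ A

/-- `A` is G-sequentially open. -/
def GOpen (M : SeqMethod X) (A : Set X) : Prop := M.GClosed Aᶜ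

/-- `M` is regular: every convergent sequence G-converges to its limit. -/
def Regular [TopologicalSpace X] (M : SeqMethod X) : Prop :=
  ∀ (s : ℕ → X) (l : X), Tendsto s atTop (𝓝 l) → M.Converges s l

/-- `A` is G-sequentially connected: `A` is nonempty and there are no nonempty
disjoint G-sequentially closed subsets of `X`, each meeting `A`, covering `A`. -/
def GConnected (M : SeqMethod X) (A : Set X) : Prop :=
  A.Nonempty ∧ ¬ ∃ U V : Set X, M.GClosed U ∧ M.GClosed V ∧
    (U ∩ A).Nonempty ∧ (V ∩ A).Nonempty ∧ Disjoint U V ∧ A ⊆ U ∪ V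

/-- The G-sequentially connected component of `x` inside a subset `A`. -/
def ComponentIn (M : SeqMethod X) (A : Set X) (x : X) : Set X :=
  ⋃₀ {C : Set X | x ∈ C ∧ C ⊆ A ∧ M.GConnected C}

/-- The G-sequentially connected component of `x` in `X`. -/
def Component (M : SeqMethod X) (x : X) : Set X :=
  ⋃₀ {C : Set X | x ∈ C ∧ M.GConnected C}

/-- `f` is G-sequentially continuous on `X`. -/
def GCont (M : SeqMethod X) (f : X → X) : Prop :=
  ∀ (s : ℕ → X) (u : X), M.Converges s u → M.Converges (fun n => f (s n)) (f u)

/-- `f` is G-sequentially continuous on the subset `A`. -/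
def GContOn (M : SeqMethod X) (f : X → X) (A : Set X) : Prop :=
  ∀ (s : ℕ → X) (u : X), (∀ n, s n ∈ A) → u ∈ A →
    M.Converges s u → M.Converges (fun n => f (s n)) (f u)

/-- `F` is G-sequentially closed in `A`. -/
def GClosedIn (M : SeqMethod X) (A F : Set X) : Prop :=
  ∃ U : Set X, M.GClosed U ∧ F = U ∩ A

/-- `V` is G-sequentially open in `A`. -/
def GOpenIn (M : SeqMethod X) (A V : Set X) : Prop :=
  V ⊆ A ∧ M.GClosedIn A (A \ V)

/-- The set of G-sequentially connected components of points of `A`. -/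
def pi0 (M : SeqMethod X) (A : Set X) : Set (Set X) :=
  {C : Set X | ∃ x ∈ A, C = M.ComponentIn A x}

/-- `X` is G-sequentially locally connected. -/
def GLocConn (M : SeqMethod X) : Prop :=
  ∀ (x : X) (U : Set X), M.GOpen U → x ∈ U →
    ∃ V : Set X, M.GConnected V ∧ (∃ O : Set X, M.GOpen O ∧ x ∈ O ∧ O ⊆ V) ∧
      x ∈ V ∧ V ⊆ U

/-- A subset `A` is G-sequentially locally connected (with the relative
G-sequentially open sets). -/
def GLocConnOn (M : SeqMethod X) (A : Set X) : Prop :=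
  ∀ a ∈ A, ∀ U : Set X, M.GOpenIn A U → a ∈ U →
    ∃ V : Set X, M.GConnected V ∧ (∃ O : Set X, M.GOpenIn A O ∧ a ∈ O ∧ O ⊆ V) ∧
      a ∈ V ∧ V ⊆ U

end SeqMethod

namespace SeqMethod

variable {X : Type*} [AddGroup X] (M : SeqMethod X)

theorem gClosure_mono {A B : Set X} (hAB : A ⊆ B) : M.GClosure A ⊆ M.GClosure B :=
  fun _ ⟨s, hs, hconv⟩ => ⟨s, fun n => hAB (hs n), hconv⟩

theorem gOpen_univ : M.GOpen Set.univ := by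
  rintro _ ⟨s, hs, -⟩
  exact (hs 0 trivial).elim

theorem gOpen_iff_forall_mem_gOpen {A : Set X} :
    M.GOpen A ↔ ∀ x ∈ A, ∃ O ⊆ A, M.GOpen O ∧ x ∈ O := by
  refine ⟨fun hA x hx => ⟨A, subset_rfl, hA, hx⟩, fun hA l hl hlA => ?_⟩
  obtain ⟨O, hOA, hO, hlO⟩ := hA l hlA
  exact hO (M.gClosure_mono (Set.compl_subset_compl.2 hOA) hl) hlO

variable {M}

theorem GConnected.subset_of_mem {A U V : Set X} (hA : M.GConnected A) (hU : M.GClosed U)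
    (hV : M.GClosed V) (hUV : Disjoint U V) (hAUV : A ⊆ U ∪ V) {p : X} (hpA : p ∈ A)
    (hpU : p ∈ U) : A ⊆ U := by
  intro a ha
  by_contra haU
  exact hA.2 ⟨U, V, hU, hV, ⟨p, hpU, hpA⟩, ⟨a, (hAUV ha).resolve_left haU, ha⟩, hUV, hAUV⟩

theorem GConnected.union {A B : Set X} (hA : M.GConnected A) (hB : M.GConnected B)
    (hAB : (A ∩ B).Nonempty) : M.GConnected (A ∪ B) := by
  obtain ⟨p, hpA, hpB⟩ := hAB
  have absorbs {U V : Set X} (hU : M.GClosed U) (hV : M.GClosed V)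
      (hUV : Disjoint U V) (hcov : A ∪ B ⊆ U ∪ V) (hpU : p ∈ U) : A ∪ B ⊆ U :=
    Set.union_subset
      (hA.subset_of_mem hU hV hUV (Set.subset_union_left.trans hcov) hpA hpU)
      (hB.subset_of_mem hU hV hUV (Set.subset_union_right.trans hcov) hpB hpU)
  refine ⟨⟨p, Or.inl hpA⟩, ?_⟩
  rintro ⟨U, V, hU, hV, ⟨u, huU, hu⟩, ⟨v, hvV, hv⟩, hUV, hcov⟩
  rcases hcov (Or.inl hpA) with hpU | hpV
  · exact hUV.ne_of_mem (absorbs hU hV hUV hcov hpU hv) hvV rfl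
  · have hcov' : A ∪ B ⊆ V ∪ U := hcov.trans (Set.union_comm U V).le
    exact hUV.symm.ne_of_mem (absorbs hV hU hUV.symm hcov' hpV hu) huU rfl

theorem GConnected.subset_component {C : Set X} (hC : M.GConnected C) {x : X} (hx : x ∈ C) :
    C ⊆ M.Component x :=
  Set.subset_sUnion_of_mem ⟨hx, hC⟩

end SeqMethod

open SeqMethod

variable {X : Type*} [AddGroup X] [TopologicalSpace X] [IsTopologicalAddGroup X]
  [FirstCountableTopology X] [T2Space X]

theorem component_gOpen_of_gLocConn (M : SeqMethod X) (h : M.GLocConn) (x : X) :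
    M.GOpen (M.Component x) := by
  refine M.gOpen_iff_forall_mem_gOpen.2 fun l ⟨C, ⟨hxC, hC⟩, hlC⟩ => ?_
  obtain ⟨V, hV, ⟨O, hO, hlO, hOV⟩, hlV, -⟩ := h l Set.univ M.gOpen_univ trivial
  have hCV : C ∪ V ⊆ M.Component x := (hC.union hV ⟨l, hlC, hlV⟩).subset_component (Or.inl hxC)
  exact ⟨O, hOV.trans (Set.subset_union_right.trans hCV), hO, hlO⟩
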